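/- In the Laver table of order 2^n, the operations ⋆ₙ and ∘ₙ satisfy: p ⋆ₙ (q ∘ₙ r) = (p ⋆ₙ q) ∘ₙ (p ⋆ₙ r), (p ∘ₙ q) ⋆ₙ r = p ⋆ₙ (q ⋆ₙ r), and (p ⋆ₙ q) ∘ₙ p = p ∘ₙ q, for all p, q, r. -/

import Mathlib

/-!
Since `x ⋆ 1` is the cyclic successor of `x`, an element of `[1, N]` is determined by `x ⋆ 1`,
so each identity is checked after right multiplication by `1`. The second identity is the defining
property of `∘`, and the third then reduces to `p ⋆ (q ⋆ 1) = (p ⋆ q) ⋆ (p ⋆ 1)`.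

For the first, downward induction from the last row (which is the identity) shows that
`p < p ⋆ q` for `p < N`, that the last column is constant `N`, and that `⋆` is left
self-distributive. Writing `succ x = x ⋆ 1`, the map `succ ∘ λ_p ∘ succ⁻¹` then intertwines `λ_q`
with `λ_{p ⋆ q}` and fixes `1 = succ N`; applying it to `succ (q ∘ r) = λ_q (λ_r 1)` gives
`succ (p ⋆ (q ∘ r)) = λ_{p ⋆ q} (λ_{p ⋆ r} 1) = succ ((p ⋆ q) ∘ (p ⋆ r))`.
-/

def LaverAxioms (N : ℕ) (star : ℕ → ℕ → ℕ) : Prop :=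
  (∀ p q, p ∈ Set.Icc 1 N → q ∈ Set.Icc 1 N → star p q ∈ Set.Icc 1 N) ∧
  (∀ p ∈ Set.Icc 1 N, star p 1 = p % N + 1) ∧
  (∀ p q, p ∈ Set.Icc 1 N → q ∈ Set.Icc 1 N →
    star p (star q 1) = star (star p q) (star p 1))

theorem Nat.strong_downward_induction_Icc {a N : ℕ} {motive : (p : ℕ) → p ∈ Set.Icc a N → Prop}
    (ind : ∀ p (hp : p ∈ Set.Icc a N),
      (∀ q (hq : q ∈ Set.Icc a N), p < q → motive q hq) → motive p hp)
    (p : ℕ) (hp : p ∈ Set.Icc a N) : motive p hp := by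
  induction hk : N - p using Nat.strong_induction_on generalizing p with
  | _ k ih => exact ind p hp fun q hq hpq ↦ ih (N - q) (by grind) q hq rfl

namespace LaverAxioms

variable {N : ℕ} {star : ℕ → ℕ → ℕ} {p q r : ℕ}

theorem star_mem (h : LaverAxioms N star) (hp : p ∈ Set.Icc 1 N) (hq : q ∈ Set.Icc 1 N) :
    star p q ∈ Set.Icc 1 N :=
  h.1 p q hp hq

theorem star_star_one (h : LaverAxioms N star) (hp : p ∈ Set.Icc 1 N) (hq : q ∈ Set.Icc 1 N) :
    star p (star q 1) = star (star p q) (star p 1) :=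
  h.2.2 p q hp hq

theorem star_one_of_lt (h : LaverAxioms N star) (hp : 1 ≤ p) (hpN : p < N) :
    star p 1 = p + 1 := by
  rw [h.2.1 p ⟨hp, hpN.le⟩, Nat.mod_eq_of_lt hpN]

theorem top_star_one (h : LaverAxioms N star) (hN : 1 ≤ N) : star N 1 = 1 := by
  rw [h.2.1 N ⟨hN, le_rfl⟩, Nat.mod_self]

theorem star_one_injOn (h : LaverAxioms N star) : Set.InjOn (star · 1) (Set.Icc 1 N) := by
  have star_one : ∀ x ∈ Set.Icc 1 N, star x 1 = if x = N then 1 else x + 1 := by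
    rintro x ⟨hx1, hxN⟩
    split_ifs with hx
    · exact hx ▸ h.top_star_one (hx ▸ hx1)
    · exact h.star_one_of_lt hx1 (lt_of_le_of_ne hxN hx)
  intro a ha b hb hab
  simp only [star_one a ha, star_one b hb] at hab
  grind

theorem top_star (h : LaverAxioms N star) (hq : q ∈ Set.Icc 1 N) : star N q = q := by
  obtain ⟨hq1, hqN⟩ := hq
  have hN : N ∈ Set.Icc 1 N := ⟨hq1.trans hqN, le_rfl⟩
  induction q, hq1 using Nat.le_induction with
  | base => exact h.top_star_one hN.1
  | succ q hq1 ih =>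
    have hq : q ∈ Set.Icc 1 N := ⟨hq1, by omega⟩
    rw [← h.star_one_of_lt hq1 (by omega), h.star_star_one hN hq, ih hq.2, h.top_star_one hN.1]

theorem lt_star (h : LaverAxioms N star) (hp : p ∈ Set.Icc 1 N) (hpN : p < N)
    (hq : q ∈ Set.Icc 1 N) : p < star p q := by
  induction p, hp using Nat.strong_downward_induction_Icc generalizing q with
  | ind p hp ih =>
    obtain ⟨hq1, hqN⟩ := hq
    induction q, hq1 using Nat.le_induction with
    | base => rw [h.star_one_of_lt hp.1 hpN]; omega
    | succ q hq1 ihq =>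
      have hq : q ∈ Set.Icc 1 N := ⟨hq1, by omega⟩
      have hp1 : p + 1 ∈ Set.Icc 1 N := ⟨by omega, hpN⟩
      have hpq := ihq hq.2
      rw [← h.star_one_of_lt hq1 (by omega), h.star_star_one hp hq, h.star_one_of_lt hp.1 hpN]
      rcases (h.star_mem hp hq).2.lt_or_eq with hlt | heq
      · exact hpq.trans (ih _ (h.star_mem hp hq) hpq hlt hp1)
      · rw [heq, h.top_star hp1]; omega

theorem star_top (h : LaverAxioms N star) (hp : p ∈ Set.Icc 1 N) : star p N = N := by
  have hN : N ∈ Set.Icc 1 N := ⟨hp.1.trans hp.2, le_rfl⟩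
  rcases hp.2.lt_or_eq with hpN | rfl
  · have hz := h.star_mem hp hN
    have hpz : p < star p N := h.lt_star hp hpN hN
    have hp1 : p + 1 ∈ Set.Icc 1 N := ⟨by omega, hpN⟩
    have key : star (star p N) (p + 1) = p + 1 := by
      have := h.star_star_one hp hN
      rwa [h.top_star_one hN.1, h.star_one_of_lt hp.1 hpN, eq_comm] at this
    by_contra hne
    have := h.lt_star hz (lt_of_le_of_ne hz.2 hne) hp1
    omega
  · exact h.top_star hp

theorem star_left_distrib (h : LaverAxioms N star) (hp : p ∈ Set.Icc 1 N) (hq : q ∈ Set.Icc 1 N)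
    (hr : r ∈ Set.Icc 1 N) : star p (star q r) = star (star p q) (star p r) := by
  induction p, hp using Nat.strong_downward_induction_Icc generalizing q r with
  | ind p hp ihp =>
  induction q, hq using Nat.strong_downward_induction_Icc generalizing r with
  | ind q hq ihq =>
  rcases hp.2.lt_or_eq with hpN | rfl
  swap
  · rw [h.top_star hq, h.top_star hr, h.top_star (h.star_mem hq hr)]
  rcases hq.2.lt_or_eq with hqN | rfl
  swap
  · rw [h.top_star hr, h.star_top hp, h.top_star (h.star_mem hp hr)]
  obtain ⟨hr1, hrN⟩ := hr
  induction r, hr1 using Nat.le_induction with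
  | base => exact h.star_star_one hp hq
  | succ r hr1 ihr =>
    have hr : r ∈ Set.Icc 1 N := ⟨hr1, by omega⟩
    have one_mem : 1 ∈ Set.Icc 1 N := ⟨le_rfl, hp.1.trans hp.2⟩
    have hpq := h.star_mem hp hq
    calc star p (star q (r + 1))
        = star p (star (star q r) (star q 1)) := by
          rw [← h.star_one_of_lt hr1 (by omega), h.star_star_one hq hr]
      _ = star (star p (star q r)) (star p (star q 1)) :=
          ihq _ (h.star_mem hq hr) (h.lt_star hq hqN hr) (h.star_mem hq one_mem)
      _ = star (star (star p q) (star p r)) (star (star p q) (star p 1)) := by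
          rw [ihr hr.2, h.star_star_one hp hq]
      _ = star (star p q) (star (star p r) (star p 1)) :=
          (ihp _ hpq (h.lt_star hp hpN hq) (h.star_mem hp hr) (h.star_mem hp one_mem)).symm
      _ = star (star p q) (star p (r + 1)) := by
          rw [← h.star_star_one hp hr, h.star_one_of_lt hr1 (by omega)]

theorem star_one_eq_of_star_one_eq (h : LaverAxioms N star) {u v : ℕ}
    (hp : p ∈ Set.Icc 1 N) (hq : q ∈ Set.Icc 1 N) (hu : u ∈ Set.Icc 1 N) (hv : v ∈ Set.Icc 1 N)
    (huv : star v 1 = star q (star u 1)) :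
    star (star p v) 1 = star (star p q) (star (star p u) 1) := by
  have one_mem : 1 ∈ Set.Icc 1 N := ⟨le_rfl, hp.1.trans hp.2⟩
  induction q, hq using Nat.strong_downward_induction_Icc generalizing u v with
  | ind q hq ih =>
  rcases hq.2.lt_or_eq with hqN | rfl
  · have hpq := h.star_mem hp hq
    rw [h.star_star_one hq hu] at huv
    calc star (star p v) 1
        = star (star p (star q u)) (star (star p q) 1) :=
          ih _ (h.star_mem hq hu) (h.lt_star hq hqN hu) hq hv huv
      _ = star (star (star p q) (star p u)) (star (star p q) 1) := by
          rw [h.star_left_distrib hp hq hu]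
      _ = star (star p q) (star (star p u) 1) :=
          (h.star_star_one hpq (h.star_mem hp hu)).symm
  · rw [h.top_star (h.star_mem hu one_mem)] at huv
    rw [h.star_one_injOn hv hu huv, h.star_top hp,
      h.top_star (h.star_mem (h.star_mem hp hu) one_mem)]

end LaverAxioms

/-- in the Laver table of order 2^n, with ∘ₙ the composition operation
(characterized by λ_{p ∘ₙ q} = λ_p ∘ λ_q), one has
p ⋆ₙ (q ∘ₙ r) = (p ⋆ₙ q) ∘ₙ (p ⋆ₙ r), (p ∘ₙ q) ⋆ₙ r = p ⋆ₙ (q ⋆ₙ r), and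
(p ⋆ₙ q) ∘ₙ p = p ∘ₙ q. -/
theorem laver_star_comp_identities (n : ℕ) (star comp : ℕ → ℕ → ℕ)
    (h : LaverAxioms (2 ^ n) star)
    (hcomp : ∀ p ∈ Set.Icc 1 (2 ^ n), ∀ q ∈ Set.Icc 1 (2 ^ n),
      comp p q ∈ Set.Icc 1 (2 ^ n) ∧
      ∀ r ∈ Set.Icc 1 (2 ^ n), star p (star q r) = star (comp p q) r) :
    ∀ p ∈ Set.Icc 1 (2 ^ n), ∀ q ∈ Set.Icc 1 (2 ^ n), ∀ r ∈ Set.Icc 1 (2 ^ n),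
      star p (comp q r) = comp (star p q) (star p r) ∧
      star (comp p q) r = star p (star q r) ∧
      comp (star p q) p = comp p q := by
  intro p hp q hq r hr
  have one_mem : 1 ∈ Set.Icc 1 (2 ^ n) := ⟨le_rfl, Nat.one_le_two_pow⟩
  have hpq := h.star_mem hp hq
  have hpr := h.star_mem hp hr
  refine ⟨h.star_one_injOn (h.star_mem hp (hcomp q hq r hr).1) (hcomp _ hpq _ hpr).1 ?_,
    ((hcomp p hp q hq).2 r hr).symm,
    h.star_one_injOn (hcomp _ hpq p hp).1 (hcomp p hp q hq).1 ?_⟩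
  · dsimp only
    rw [← (hcomp _ hpq _ hpr).2 1 one_mem]
    exact h.star_one_eq_of_star_one_eq hp hq hr (hcomp q hq r hr).1
      ((hcomp q hq r hr).2 1 one_mem).symm
  · dsimp only
    rw [← (hcomp _ hpq p hp).2 1 one_mem, ← (hcomp p hp q hq).2 1 one_mem, h.star_star_one hp hq]
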